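/- arXiv:1505.06411 — 4 statements merged into one kernel-verified Lean document; each statement's English description precedes it below -/
import Mathlib

section
/- Let p be a prime with p ≡ 3 (mod 4), p ≠ 3. If m is a Markoff number then 3m ≢ ±2 (mod p). -/
/-
Reduce a Markoff triple through `m` modulo `p`: `a² + b² + c² = 3abc` with `c = m`. If `3c = 2`,
the equation becomes `(a - b)² + c² = 0`; as `-1` is not a square mod `p`, this forces `c = 0`,
hence `2 = 0`, impossible since `-1 = 1` would then be a square. The case `3c = -2` follows
from the symmetry `(a, b, c) ↦ (a, -b, -c)` of the Markoff equation.
-/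

def IsMarkoffNumber (m : ℤ) : Prop :=
  ∃ x₁ x₂ x₃ : ℤ, 0 < x₁ ∧ 0 < x₂ ∧ 0 < x₃ ∧
    x₁ ^ 2 + x₂ ^ 2 + x₃ ^ 2 = 3 * x₁ * x₂ * x₃ ∧
    (m = x₁ ∨ m = x₂ ∨ m = x₃)

theorem IsMarkoffNumber.exists_markoff_eq {m : ℤ} (hm : IsMarkoffNumber m) :
    ∃ a b : ℤ, a ^ 2 + b ^ 2 + m ^ 2 = 3 * a * b * m := by
  obtain ⟨x₁, x₂, x₃, -, -, -, h, rfl | rfl | rfl⟩ := hm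
  · exact ⟨x₂, x₃, by linear_combination h⟩
  · exact ⟨x₁, x₃, by linear_combination h⟩
  · exact ⟨x₁, x₂, h⟩

section Field

variable {F : Type*} [Field F]

theorem eq_zero_of_sq_add_sq_eq_zero (hF : ¬IsSquare (-1 : F)) {a b : F}
    (h : a ^ 2 + b ^ 2 = 0) : b = 0 := by
  by_contra hb
  exact hF ⟨a / b, by field_simp; linear_combination -h⟩

theorem markoff_three_mul_ne_two (hF : ¬IsSquare (-1 : F)) {a b c : F}
    (h : a ^ 2 + b ^ 2 + c ^ 2 = 3 * a * b * c) : 3 * c ≠ 2 := by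
  intro hc
  have hc0 : c = 0 :=
    eq_zero_of_sq_add_sq_eq_zero hF (a := a - b) (by linear_combination h + a * b * hc)
  have h2 : (2 : F) = 0 := by rw [← hc, hc0, mul_zero]
  exact hF ⟨1, by linear_combination -h2⟩

theorem markoff_three_mul_ne_neg_two (hF : ¬IsSquare (-1 : F)) {a b c : F}
    (h : a ^ 2 + b ^ 2 + c ^ 2 = 3 * a * b * c) : 3 * c ≠ -2 := by
  intro hc
  exact markoff_three_mul_ne_two hF (a := a) (b := -b) (c := -c) (by linear_combination h)
    (by linear_combination -hc)

end Field

theorem markoff_number_not_pm_two_thirds_mod_p_general (p : ℕ) [Fact p.Prime]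
    (hp4 : p % 4 = 3) (m : ℤ) (hm : IsMarkoffNumber m) :
    (3 * m : ZMod p) ≠ 2 ∧ (3 * m : ZMod p) ≠ -2 := by
  obtain ⟨a, b, h⟩ := hm.exists_markoff_eq
  have hF : ¬IsSquare (-1 : ZMod p) := fun hsq => ZMod.exists_sq_eq_neg_one_iff.mp hsq hp4
  have hmod : (a : ZMod p) ^ 2 + (b : ZMod p) ^ 2 + (m : ZMod p) ^ 2
      = 3 * (a : ZMod p) * (b : ZMod p) * (m : ZMod p) := by
    exact_mod_cast congrArg (Int.cast : ℤ → ZMod p) h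
  exact ⟨markoff_three_mul_ne_two hF hmod, markoff_three_mul_ne_neg_two hF hmod⟩

theorem markoff_number_not_pm_two_thirds_mod_p (p : ℕ) [Fact p.Prime]
    (hp4 : p % 4 = 3) (hp3 : p ≠ 3) (m : ℤ) (hm : IsMarkoffNumber m) :
    (3 * m : ZMod p) ≠ 2 ∧ (3 * m : ZMod p) ≠ -2 :=
  markoff_number_not_pm_two_thirds_mod_p_general p hp4 m hm
end

section
/- If a₁, a₂, a₃ are real numbers with |aⱼ| ≤ 2 for all j and a₁² + a₂² + a₃² = a₁a₂a₃, then a₁ = a₂ = a₃ = 0. -/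
/-! By AM–GM, `|a₁| ≤ 2` gives `a₁a₂a₃ ≤ 2|a₂a₃| ≤ a₂² + a₃²`, so the equation forces `a₁² ≤ 0`;
with `a₁ = 0` it reads `a₂² + a₃² = 0`. -/

theorem mul_mul_le_sq_add_sq_of_abs_le_two {α : Type*} [CommRing α] [LinearOrder α]
    [IsStrictOrderedRing α] {a : α} (ha : |a| ≤ 2) (b c : α) :
    a * b * c ≤ b ^ 2 + c ^ 2 :=
  calc a * b * c ≤ |a * (b * c)| := by rw [mul_assoc]; exact le_abs_self _
    _ = |a| * |b * c| := abs_mul _ _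
    _ ≤ 2 * |b * c| := mul_le_mul_of_nonneg_right ha (abs_nonneg _)
    _ = 2 * |b| * |c| := by rw [abs_mul, mul_assoc]
    _ ≤ |b| ^ 2 + |c| ^ 2 := two_mul_le_add_sq _ _
    _ = b ^ 2 + c ^ 2 := by rw [sq_abs, sq_abs]

theorem markoff_type_trivial_in_box_general (a₁ a₂ a₃ : ℝ)
    (h₁ : |a₁| ≤ 2)
    (h : a₁ ^ 2 + a₂ ^ 2 + a₃ ^ 2 = a₁ * a₂ * a₃) :
    a₁ = 0 ∧ a₂ = 0 ∧ a₃ = 0 := by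
  have hbound := mul_mul_le_sq_add_sq_of_abs_le_two h₁ a₂ a₃
  have ha₁ : a₁ = 0 := pow_eq_zero_iff two_ne_zero |>.mp <|
    le_antisymm (by linarith) (sq_nonneg a₁)
  subst ha₁
  have hsum : a₂ ^ 2 + a₃ ^ 2 = 0 := by simpa using h
  obtain ⟨ha₂, ha₃⟩ := (add_eq_zero_iff_of_nonneg (sq_nonneg a₂) (sq_nonneg a₃)).mp hsum
  exact ⟨rfl, pow_eq_zero_iff two_ne_zero |>.mp ha₂, pow_eq_zero_iff two_ne_zero |>.mp ha₃⟩

theorem markoff_type_trivial_in_box (a₁ a₂ a₃ : ℝ)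
    (h₁ : |a₁| ≤ 2) (h₂ : |a₂| ≤ 2) (h₃ : |a₃| ≤ 2)
    (h : a₁ ^ 2 + a₂ ^ 2 + a₃ ^ 2 = a₁ * a₂ * a₃) :
    a₁ = 0 ∧ a₂ = 0 ∧ a₃ = 0 :=
  markoff_type_trivial_in_box_general a₁ a₂ a₃ h₁ h
end

section
/- Every Markoff triple can be reduced to (1,1,1) by finitely many applications of coordinate permutations and the Vieta involutions Rⱼ; equivalently, the group Γ generated by coordinate permutations and R₁, R₂, R₃ acts transitively on the set of Markoff triples. -/
/-!
Sort a positive Markoff triple as `a ≤ b ≤ c`. Unless it is `(1, 1, 1)`, the Vieta involution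
on the largest coordinate replaces `c` by `c' = 3ab - c`, the other root of
`t² - 3abt + a² + b²`. Since `c c' = a² + b² > 0` the new triple is again positive, and since
the quadratic is `≤ 0` at `t = b < c` we get `c' ≤ b < c`. So the coordinate sum strictly
decreases, and the descent must end at `(1, 1, 1)`.
-/

/-- One move of the Markoff group: a Vieta involution or a coordinate
permutation. -/
def MarkoffMove (x y : ℤ × ℤ × ℤ) : Prop :=
  y = (x.1, x.2.1, 3 * x.1 * x.2.1 - x.2.2) ∨
  y = (x.1, 3 * x.1 * x.2.2 - x.2.1, x.2.2) ∨
  y = (3 * x.2.1 * x.2.2 - x.1, x.2.1, x.2.2) ∨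
  y = (x.1, x.2.2, x.2.1) ∨
  y = (x.2.1, x.1, x.2.2) ∨
  y = (x.2.1, x.2.2, x.1) ∨
  y = (x.2.2, x.1, x.2.1) ∨
  y = (x.2.2, x.2.1, x.1)

open Relation

def IsMarkoffTriple (a b c : ℤ) : Prop :=
  0 < a ∧ 0 < b ∧ 0 < c ∧ a ^ 2 + b ^ 2 + c ^ 2 = 3 * a * b * c

theorem reflTransGen_markoffMove_of_sorted {P : ℤ → ℤ → ℤ → Prop} {z : ℤ × ℤ × ℤ}
    (swap₁₂ : ∀ {a b c}, P a b c → P b a c) (swap₂₃ : ∀ {a b c}, P a b c → P a c b)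
    (sorted : ∀ {a b c}, a ≤ b → b ≤ c → P a b c → ReflTransGen MarkoffMove (a, b, c) z)
    {a b c : ℤ} (h : P a b c) : ReflTransGen MarkoffMove (a, b, c) z := by
  rcases le_total a b with hab | hba <;> rcases le_total b c with hbc | hcb <;>
    rcases le_total a c with hac | hca
  all_goals first
    | exact sorted hab hbc h
    | exact .head (by simp [MarkoffMove]) (sorted hac hcb (swap₂₃ h))
    | exact .head (by simp [MarkoffMove]) (sorted hba hac (swap₁₂ h))
    | exact .head (by simp [MarkoffMove]) (sorted hbc hca (swap₂₃ (swap₁₂ h)))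
    | exact .head (by simp [MarkoffMove]) (sorted hca hab (swap₁₂ (swap₂₃ h)))
    | exact .head (by simp [MarkoffMove]) (sorted hcb hba (swap₁₂ (swap₂₃ (swap₁₂ h))))

namespace IsMarkoffTriple

variable {a b c : ℤ}

theorem swap₁₂ (h : IsMarkoffTriple a b c) : IsMarkoffTriple b a c := by
  obtain ⟨ha, hb, hc, h⟩ := h
  exact ⟨hb, ha, hc, by linear_combination h⟩

theorem swap₂₃ (h : IsMarkoffTriple a b c) : IsMarkoffTriple a c b := by
  obtain ⟨ha, hb, hc, h⟩ := h
  exact ⟨ha, hc, hb, by linear_combination h⟩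

theorem vieta (h : IsMarkoffTriple a b c) : IsMarkoffTriple a b (3 * a * b - c) := by
  obtain ⟨ha, hb, hc, h⟩ := h
  have hprod : c * (3 * a * b - c) = a ^ 2 + b ^ 2 := by linear_combination -h
  exact ⟨ha, hb, pos_of_mul_pos_right (hprod ▸ by positivity) hc.le, by linear_combination h⟩

theorem mid_lt_max (h : IsMarkoffTriple a b c) (hab : a ≤ b) (hbc : b ≤ c) (hc : 1 < c) :
    b < c := by
  refine hbc.lt_of_ne fun hbc => ?_
  subst hbc
  obtain ⟨ha, hb, -, h⟩ := h
  -- `a² = b² (3a - 2) ≥ b²` forces `a = b`, and then `3a² = 3a³`.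
  have hba : b ≤ a := by nlinarith [mul_le_mul_of_nonneg_left (show 1 ≤ a by omega) (sq_nonneg b)]
  obtain rfl : a = b := le_antisymm hab hba
  nlinarith

theorem vieta_lt (h : IsMarkoffTriple a b c) (hab : a ≤ b) (hbc : b ≤ c) (hc : 1 < c) :
    3 * a * b - c < c := by
  have hbc : b < c := h.mid_lt_max hab hbc hc
  obtain ⟨ha, hb, -, h⟩ := h
  have quadratic_at_b : (b - c) * (b - (3 * a * b - c)) ≤ 0 := by
    nlinarith [mul_le_mul_of_nonneg_left (show 1 ≤ a by omega) (sq_nonneg b)]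
  nlinarith

theorem reflTransGen_one (h : IsMarkoffTriple a b c) :
    ReflTransGen MarkoffMove (a, b, c) (1, 1, 1) := by
  induction hn : (a + b + c).toNat using Nat.strong_induction_on generalizing a b c with
  | _ n ih =>
  refine reflTransGen_markoffMove_of_sorted
    (P := fun a b c => IsMarkoffTriple a b c ∧ (a + b + c).toNat = n)
    (fun ⟨h, hn⟩ => ⟨h.swap₁₂, by omega⟩) (fun ⟨h, hn⟩ => ⟨h.swap₂₃, by omega⟩) ?_ ⟨h, hn⟩
  rintro a b c hab hbc ⟨h, rfl⟩
  by_cases hc : c ≤ 1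
  · obtain ⟨rfl, rfl, rfl⟩ : a = 1 ∧ b = 1 ∧ c = 1 := by have := h.1; omega
    exact .refl
  · have hlt := h.vieta_lt hab hbc (by omega)
    have hv := h.vieta
    have hdescent : (a + b + (3 * a * b - c)).toNat < (a + b + c).toNat := by
      obtain ⟨ha, hb, hc', -⟩ := hv
      omega
    exact .head (Or.inl rfl) (ih _ hdescent hv rfl)

end IsMarkoffTriple

theorem markoff_descent_to_one (x : ℤ × ℤ × ℤ)
    (hpos : 0 < x.1 ∧ 0 < x.2.1 ∧ 0 < x.2.2)
    (h : x.1 ^ 2 + x.2.1 ^ 2 + x.2.2 ^ 2 = 3 * x.1 * x.2.1 * x.2.2) :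
    Relation.ReflTransGen MarkoffMove x (1, 1, 1) :=
  IsMarkoffTriple.reflTransGen_one ⟨hpos.1, hpos.2.1, hpos.2.2, h⟩
end

section
/- Every odd Markoff number is congruent to 1 modulo 4. -/
theorem Nat.mod_four_eq_one_of_isSquare_neg_one {n : ℕ} (hn : Odd n)
    (h : IsSquare (-1 : ZMod n)) : n % 4 = 1 := by
  refine (Nat.odd_mod_four_iff.mp (Nat.odd_iff.mp hn)).resolve_right fun h3 => ?_
  have hJ : jacobiSym (-1) n = -1 := by
    rw [jacobiSym.at_neg_one hn, ZMod.χ₄_nat_three_mod_four h3]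
  exact ZMod.nonsquare_of_jacobiSym_eq_neg_one hJ (by exact_mod_cast h)

theorem Int.emod_four_eq_one_of_dvd_sq_add_sq {m x y : ℤ} (hm : 0 < m) (hodd : Odd m)
    (hxy : IsCoprime x y) (hdvd : m ∣ x ^ 2 + y ^ 2) : m % 4 = 1 := by
  have hsq : IsSquare (-1 : ZMod m.natAbs) :=
    ZMod.isSquare_neg_one_of_dvd (Int.natAbs_dvd_natAbs.mpr hdvd)
      (ZMod.isSquare_neg_one_of_eq_sq_add_sq_of_isCoprime rfl hxy)
  have := Nat.mod_four_eq_one_of_isSquare_neg_one (Int.natAbs_odd.mpr hodd) hsq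
  omega

structure IsMarkoffTriple_s18 (x y z : ℤ) : Prop where
  x_pos : 0 < x
  y_pos : 0 < y
  z_pos : 0 < z
  eq : x ^ 2 + y ^ 2 + z ^ 2 = 3 * x * y * z

namespace IsMarkoffTriple_s18

variable {x y z : ℤ}

theorem swap₁₂_s18 (h : IsMarkoffTriple_s18 x y z) : IsMarkoffTriple_s18 y x z :=
  ⟨h.y_pos, h.x_pos, h.z_pos, by linear_combination h.eq⟩

theorem swap₂₃_s18 (h : IsMarkoffTriple_s18 x y z) : IsMarkoffTriple_s18 x z y :=
  ⟨h.x_pos, h.z_pos, h.y_pos, by linear_combination h.eq⟩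

theorem mul_vieta_eq_sq_add_sq (h : IsMarkoffTriple_s18 x y z) : z * (3 * x * y - z) = x ^ 2 + y ^ 2 := by
  linear_combination -h.eq

theorem dvd_sq_add_sq (h : IsMarkoffTriple_s18 x y z) : z ∣ x ^ 2 + y ^ 2 :=
  ⟨_, h.mul_vieta_eq_sq_add_sq.symm⟩

theorem vieta_s18 (h : IsMarkoffTriple_s18 x y z) : IsMarkoffTriple_s18 x y (3 * x * y - z) := by
  have := h.mul_vieta_eq_sq_add_sq
  obtain ⟨hx, hy, hz, heq⟩ := h
  refine ⟨hx, hy, ?_, by linear_combination heq⟩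
  nlinarith

theorem vieta_lt_s18 (h : IsMarkoffTriple_s18 x y z) (hxz : x ≤ z) (hyz : y ≤ z) (hx : 1 < x) :
    3 * x * y - z < z := by
  nlinarith [h.x_pos, h.y_pos, h.eq]

theorem isCoprime (h : IsMarkoffTriple_s18 x y z) : IsCoprime x y := by
  induction hn : (x + y + z).toNat using Nat.strong_induction_on generalizing x y z with
  | _ n ih =>
  wlog hxy : x ≤ y generalizing x y
  · exact (this h.swap₁₂_s18 (by rw [← hn, add_comm y]) (le_of_not_ge hxy)).symm
  have hz := h.z_pos
  obtain rfl | hx := (Int.add_one_le_of_lt h.x_pos).eq_or_lt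
  · exact isCoprime_one_left
  rcases le_total y z with hyz | hzy
  · have hlt := h.vieta_lt_s18 (hxy.trans hyz) hyz hx
    exact ih _ (by omega) h.vieta_s18 rfl
  · have hlt := h.swap₂₃_s18.vieta_lt_s18 hxy hzy hx
    have hc : IsCoprime x (3 * x * z - y) := ih _ (by omega) h.swap₂₃_s18.vieta_s18.swap₂₃_s18 rfl
    rwa [show 3 * x * z - y = -y + x * (3 * z) by ring, IsCoprime.add_mul_left_right_iff,
      IsCoprime.neg_right_iff] at hc

end IsMarkoffTriple_s18

theorem IsMarkoffNumber.exists_isMarkoffTriple {m : ℤ} (hm : IsMarkoffNumber m) :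
    ∃ x y, IsMarkoffTriple_s18 x y m := by
  obtain ⟨x₁, x₂, x₃, h₁, h₂, h₃, heq, rfl | rfl | rfl⟩ := hm
  · exact ⟨x₂, x₃, h₂, h₃, h₁, by linear_combination heq⟩
  · exact ⟨x₁, x₃, h₁, h₃, h₂, by linear_combination heq⟩
  · exact ⟨x₁, x₂, h₁, h₂, h₃, heq⟩

theorem odd_markoff_number_one_mod_four (m : ℤ) (hm : IsMarkoffNumber m)
    (hodd : Odd m) : m % 4 = 1 := by
  obtain ⟨x, y, h⟩ := hm.exists_isMarkoffTriple
  exact Int.emod_four_eq_one_of_dvd_sq_add_sq h.z_pos hodd h.isCoprime h.dvd_sq_add_sq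
end
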